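/- arXiv:2309.09253 — 3 statements merged into one kernel-verified Lean document; each statement's English description precedes it below -/
import Mathlib

section
/- Let H > 0, J > 0, G > 0, δ ≥ 0 and t be real numbers with t − δ − (ln 2) · H / G > 0. If b > 0 and f > 0 satisfy the latency constraint H / (b · log₂(1 + G/b)) + J/f + δ ≤ t, then f ≥ J / (t − δ − (ln 2) · H / G). (This is the lower bound on the CPU frequency stated in Lemma 1.) -/
/-- Lemma 1 (lower bound on CPU frequency): if `b > 0`, `f > 0` satisfy the latency
constraint `H / (b * log₂(1 + G/b)) + J/f + δ ≤ t`, then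
`f ≥ J / (t - δ - (ln 2) * H / G)`. -/
theorem stmt_7 (H J G δ t : ℝ) (hH : 0 < H) (hJ : 0 < J) (hG : 0 < G) (hδ : 0 ≤ δ)
    (ht : 0 < t - δ - Real.log 2 * H / G) (b f : ℝ) (hb : 0 < b) (hf : 0 < f)
    (hcon : H / (b * Real.logb 2 (1 + G / b)) + J / f + δ ≤ t) :
    f ≥ J / (t - δ - Real.log 2 * H / G) := by
  have hlog2 : 0 < Real.log 2 := Real.log_pos (by norm_num)
  have h1 : (1 : ℝ) < 1 + G / b := by
    have : 0 < G / b := div_pos hG hb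
    linarith
  have hlb : 0 < Real.logb 2 (1 + G / b) := Real.logb_pos (by norm_num) h1
  have hden : 0 < b * Real.logb 2 (1 + G / b) := mul_pos hb hlb
  -- b * logb 2 (1+G/b) ≤ G / log 2
  have hkey : b * Real.logb 2 (1 + G / b) ≤ G / Real.log 2 := by
    have hlog_le : Real.log (1 + G / b) ≤ G / b := by
      have := Real.log_le_sub_one_of_pos (show (0:ℝ) < 1 + G / b by linarith)
      linarith
    rw [Real.logb, div_eq_mul_inv]
    calc b * (Real.log (1 + G / b) * (Real.log 2)⁻¹)
        ≤ b * ((G / b) * (Real.log 2)⁻¹) := by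
          apply mul_le_mul_of_nonneg_left _ hb.le
          exact mul_le_mul_of_nonneg_right hlog_le (inv_nonneg.mpr hlog2.le)
      _ = G * (Real.log 2)⁻¹ := by field_simp
  -- hence H / (b * logb ...) ≥ H * log 2 / G = log 2 * H / G
  have hcomm : Real.log 2 * H / G ≤ H / (b * Real.logb 2 (1 + G / b)) := by
    rw [div_le_div_iff₀ (by positivity) hden]
    have : b * Real.logb 2 (1 + G / b) * Real.log 2 ≤ G := by
      have := mul_le_mul_of_nonneg_right hkey hlog2.le
      rwa [div_mul_cancel₀ _ hlog2.ne'] at this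
    calc Real.log 2 * H * (b * Real.logb 2 (1 + G / b))
        = H * (b * Real.logb 2 (1 + G / b) * Real.log 2) := by ring
      _ ≤ H * G := mul_le_mul_of_nonneg_left this hH.le
  have hJf : J / f ≤ t - δ - Real.log 2 * H / G := by linarith
  rw [ge_iff_le, div_le_iff₀ ht]
  have := mul_le_mul_of_nonneg_right hJf hf.le
  rwa [div_mul_cancel₀ _ hf.ne', mul_comm] at this
end

section
/- For every real constant ξ > 0, the function y(x) = x · 2^(ξ/x) − x is strictly decreasing on the interval (0, ∞); that is, for all 0 < x₁ < x₂ one has x₁ · 2^(ξ/x₁) − x₁ > x₂ · 2^(ξ/x₂) − x₂. -/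
/-!
Writing `t = ξ / x`, the function becomes `x * 2 ^ (ξ / x) - x = ξ * (2 ^ t - 1) / t`, the slope
of the strictly convex function `t ↦ 2 ^ t` between `0` and `t`. This slope strictly increases
with `t`, while `t = ξ / x` strictly decreases with `x`.
-/

open Real Set

theorem strictConvexOn_rpow_left {b : ℝ} (hb₀ : 0 < b) (hb₁ : b ≠ 1) :
    StrictConvexOn ℝ univ fun x : ℝ ↦ b ^ x := by
  refine ⟨convex_univ, fun x _ y _ hxy s t hs ht hst ↦ ?_⟩
  have hlog : log b ≠ 0 := log_ne_zero_of_pos_of_ne_one hb₀ hb₁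
  have hexp := strictConvexOn_exp.2 (mem_univ (log b * x)) (mem_univ (log b * y))
    (by simpa [hlog] using hxy) hs ht hst
  simp only [smul_eq_mul, rpow_def_of_pos hb₀] at hexp ⊢
  convert hexp using 2
  ring

theorem strictMonoOn_rpow_left_sub_one_div {b : ℝ} (hb₀ : 0 < b) (hb₁ : b ≠ 1) :
    StrictMonoOn (fun t : ℝ ↦ (b ^ t - 1) / t) {0}ᶜ := by
  intro s hs t ht hst
  simpa using (strictConvexOn_rpow_left hb₀ hb₁).secant_strict_mono (mem_univ 0) (mem_univ s)
    (mem_univ t) hs ht hst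

/-- For every `ξ > 0`, the function `y(x) = x * 2^(ξ/x) - x` is strictly decreasing on
`(0, ∞)`. -/
theorem stmt_8 (ξ : ℝ) (hξ : 0 < ξ) :
    ∀ x₁ x₂ : ℝ, 0 < x₁ → x₁ < x₂ →
      x₁ * (2 : ℝ) ^ (ξ / x₁) - x₁ > x₂ * (2 : ℝ) ^ (ξ / x₂) - x₂ := by
  intro x₁ x₂ hx₁ hx₁₂
  have hx₂ : 0 < x₂ := hx₁.trans hx₁₂
  have as_slope : ∀ x : ℝ, 0 < x →
      x * (2 : ℝ) ^ (ξ / x) - x = ξ * (((2 : ℝ) ^ (ξ / x) - 1) / (ξ / x)) := by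
    intro x hx
    field_simp
  have hslope := strictMonoOn_rpow_left_sub_one_div two_pos (by norm_num : (2 : ℝ) ≠ 1)
    (div_pos hξ hx₂).ne' (div_pos hξ hx₁).ne' (div_lt_div_of_pos_left hξ hx₁ hx₁₂)
  rw [as_slope x₁ hx₁, as_slope x₂ hx₂]
  exact mul_lt_mul_of_pos_left hslope hξ
end

section
/- Let H > 0, J > 0, δ ≥ 0, N₀ > 0, g > 0, b_max > 0, f_max > 0 and t be real numbers, and set η = t − δ − J/f_max, γ = H/b_max and ζ = N₀·b_max/g; assume η > 0. If 0 < b ≤ b_max, 0 < f ≤ f_max and p > 0 satisfy the latency constraint H / (b · log₂(1 + g·p/(N₀·b))) + J/f + δ ≤ t, then p ≥ ζ · (2^(γ/η) − 1). (This is the lower bound on the transmit power stated in Lemma 2.) -/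
open Real Set

lemma convexOn_two_rpow : ConvexOn ℝ univ (fun x : ℝ => (2:ℝ) ^ x) := by
  have h2 : (0:ℝ) < 2 := by norm_num
  refine ⟨convex_univ, ?_⟩
  intro x _ y _ a b ha hb hab
  simp only [smul_eq_mul]
  rw [Real.rpow_def_of_pos h2, Real.rpow_def_of_pos h2, Real.rpow_def_of_pos h2]
  have := convexOn_exp.2 (mem_univ (Real.log 2 * x)) (mem_univ (Real.log 2 * y)) ha hb hab
  simp only [smul_eq_mul] at this
  calc Real.exp (Real.log 2 * (a * x + b * y))
      = Real.exp (a * (Real.log 2 * x) + b * (Real.log 2 * y)) := by ring_nf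
    _ ≤ a * Real.exp (Real.log 2 * x) + b * Real.exp (Real.log 2 * y) := this

-- secant mono for 2^x at 0: for 0 < u ≤ v, (2^u - 1)/u ≤ (2^v - 1)/v
lemma secant_two (u v : ℝ) (hu : 0 < u) (huv : u ≤ v) :
    ((2:ℝ) ^ u - 1) / u ≤ ((2:ℝ) ^ v - 1) / v := by
  have := convexOn_two_rpow.secant_mono (a := 0) (x := u) (y := v)
    (mem_univ _) (mem_univ _) (mem_univ _) hu.ne' (lt_of_lt_of_le hu huv).ne' huv
  simpa using this

/-- Lemma 2 (lower bound on transmit power): with `η = t - δ - J/f_max > 0`,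
`γ = H/b_max` and `ζ = N₀·b_max/g`, if `0 < b ≤ b_max`, `0 < f ≤ f_max` and `p > 0`
satisfy `H / (b * log₂(1 + g·p/(N₀·b))) + J/f + δ ≤ t`, then `p ≥ ζ * (2^(γ/η) - 1)`. -/
theorem stmt_16 (H J δ N₀ g bmax fmax t : ℝ)
    (hH : 0 < H) (hJ : 0 < J) (hδ : 0 ≤ δ) (hN₀ : 0 < N₀) (hg : 0 < g)
    (hbmax : 0 < bmax) (hfmax : 0 < fmax)
    (η γ ζ : ℝ) (hη : η = t - δ - J / fmax) (hγ : γ = H / bmax) (hζ : ζ = N₀ * bmax / g)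
    (hηpos : 0 < η)
    (b f p : ℝ) (hb : 0 < b) (hble : b ≤ bmax) (hf : 0 < f) (hfle : f ≤ fmax) (hp : 0 < p)
    (hcon : H / (b * Real.logb 2 (1 + g * p / (N₀ * b))) + J / f + δ ≤ t) :
    p ≥ ζ * ((2 : ℝ) ^ (γ / η) - 1) := by
  set L := Real.logb 2 (1 + g * p / (N₀ * b)) with hLdef
  have hargpos : 0 < g * p / (N₀ * b) := by positivity
  have harg : 1 < 1 + g * p / (N₀ * b) := by linarith
  have hL : 0 < L := Real.logb_pos (by norm_num) harg
  have hJf : J / fmax ≤ J / f := by gcongr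
  have h1 : H / (b * L) ≤ η := by rw [hη]; linarith
  have hbL : 0 < b * L := by positivity
  set ξ := H / η with hξdef
  have hξ : 0 < ξ := by positivity
  have h2 : ξ ≤ b * L := by
    rw [div_le_iff₀ hηpos]
    rw [div_le_iff₀ hbL] at h1
    linarith
  have hL2 : ξ / b ≤ L := by rw [div_le_iff₀ hb]; linarith [h2, mul_comm b L]
  have hrw : (1 : ℝ) + g * p / (N₀ * b) = (2 : ℝ) ^ L :=
    (Real.rpow_logb (by norm_num) (by norm_num) (by positivity)).symm
  have h3 : (2 : ℝ) ^ (ξ / b) ≤ 1 + g * p / (N₀ * b) := by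
    rw [hrw]
    exact Real.rpow_le_rpow_of_exponent_le (by norm_num) hL2
  -- p ≥ (N₀ * b / g) * (2^(ξ/b) - 1)
  have h4 : N₀ * b / g * ((2 : ℝ) ^ (ξ / b) - 1) ≤ p := by
    have h5 : (2 : ℝ) ^ (ξ / b) - 1 ≤ g * p / (N₀ * b) := by linarith
    rw [div_mul_eq_mul_div, div_le_iff₀ (by positivity : (0:ℝ) < g)]
    rw [le_div_iff₀ (by positivity : (0:ℝ) < N₀ * b)] at h5
    nlinarith
  have hu : γ / η = ξ / bmax := by
    rw [hγ, hξdef, div_div, div_div, mul_comm]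
  have hupos : 0 < ξ / bmax := by positivity
  have huv : ξ / bmax ≤ ξ / b := by gcongr
  have hsec := secant_two (ξ / bmax) (ξ / b) hupos huv
  -- multiply the secant inequality by ξ and simplify
  set A := (2 : ℝ) ^ (ξ / bmax) - 1 with hA
  set B := (2 : ℝ) ^ (ξ / b) - 1 with hB
  have e1 : ξ * (A / (ξ / bmax)) = bmax * A := by
    field_simp
  have e2 : ξ * (B / (ξ / b)) = b * B := by
    field_simp
  have h6 : bmax * A ≤ b * B := by
    rw [← e1, ← e2]
    exact mul_le_mul_of_nonneg_left hsec hξ.le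
  have hApos : 0 ≤ A := by
    rw [hA]
    have : (2:ℝ) ^ (0:ℝ) ≤ (2:ℝ) ^ (ξ / bmax) :=
      Real.rpow_le_rpow_of_exponent_le (by norm_num) hupos.le
    simpa using by linarith [this]
  have h7 : N₀ * bmax / g * A ≤ N₀ * b / g * B := by
    rw [div_mul_eq_mul_div, div_mul_eq_mul_div, div_le_div_iff_of_pos_right hg]
    nlinarith [mul_le_mul_of_nonneg_left h6 hN₀.le]
  rw [hζ, hu, ← hA]
  linarith
end
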